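/- Consider the iteration on symmetric positive semidefinite matrices: X_{v,1} = Σ_{(v,u,σ)∈E} C_σᵀ C_σ, X_{v,k+1} = Σ_{(v,u,σ)∈E} A_σᵀ X_{u,k} A_σ, and let C_{v,k} = ker(Σ_{t=1}^{k} X_{v,t}). Then for every node v and every k, C_{v,k} equals the set of x ∈ ℝⁿ such that every path of length at most k starting at v produces zero output from initial state x with zero input; moreover the sequence (C_{v,k})_k is nonincreasing in k and stabilizes after at most Σ_{v∈V} n_v steps, with C_{v,K} = C_v for K = Σ_v n_v. -/

import Mathlib

open Matrix

/-- Zero-input state propagation of a rectangular constrained switching system: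
node dimensions `nd`, edges `Λ` with endpoint maps `src`, `tgt`, matrices `A`. -/
def fstate {V Λ : Type*} {nd : V → ℕ} (src tgt : Λ → V)
    (A : (σ : Λ) → Matrix (Fin (nd (tgt σ))) (Fin (nd (src σ))) ℝ)
    (σseq : ℕ → Λ) (hch : ∀ t, tgt (σseq t) = src (σseq (t + 1)))
    (x : Fin (nd (src (σseq 0))) → ℝ) : (t : ℕ) → Fin (nd (src (σseq t))) → ℝ
  | 0 => x
  | t + 1 => cast (congrArg (fun u => Fin (nd u) → ℝ) (hch t))
      ((A (σseq t)).mulVec (fstate src tgt A σseq hch x t))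

/-- The observability iteration `X_{v,1} = ∑ CᵀC`, `X_{v,k+1} = ∑ Aᵀ X_{u,k} A`
over outgoing edges. -/
noncomputable def Xit {V Λ : Type*} [DecidableEq V] [DecidableEq Λ] {nd : V → ℕ} {m : ℕ}
    (src tgt : Λ → V) (Efin : Finset Λ)
    (A : (σ : Λ) → Matrix (Fin (nd (tgt σ))) (Fin (nd (src σ))) ℝ)
    (C : (σ : Λ) → Matrix (Fin m) (Fin (nd (src σ))) ℝ) :
    ℕ → (v : V) → Matrix (Fin (nd v)) (Fin (nd v)) ℝ
  | 0, _ => 0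
  | k + 1, v =>
    ∑ σ ∈ (Efin.filter fun σ => src σ = v).attach,
      cast (congrArg (fun u => Matrix (Fin (nd u)) (Fin (nd u)) ℝ)
          ((Finset.mem_filter.mp σ.2).2))
        (if k = 0 then (C σ.1)ᵀ * C σ.1
         else (A σ.1)ᵀ * Xit src tgt Efin A C k (tgt σ.1) * A σ.1)

/-- `C_{v,k} = ker (∑_{t=1}^k X_{v,t})`. -/
noncomputable def Ck {V Λ : Type*} [DecidableEq V] [DecidableEq Λ] {nd : V → ℕ} {m : ℕ}
    (src tgt : Λ → V) (Efin : Finset Λ)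
    (A : (σ : Λ) → Matrix (Fin (nd (tgt σ))) (Fin (nd (src σ))) ℝ)
    (C : (σ : Λ) → Matrix (Fin m) (Fin (nd (src σ))) ℝ)
    (k : ℕ) (v : V) : Submodule ℝ (Fin (nd v) → ℝ) :=
  LinearMap.ker (Matrix.mulVecLin (∑ t ∈ Finset.Icc 1 k, Xit src tgt Efin A C t v))
section Aux
variable {V : Type*} {nd : V → ℕ}

/-- Cast of vectors along node equality, as a linear map. -/
def pcastL {u v : V} (h : u = v) : (Fin (nd u) → ℝ) →ₗ[ℝ] (Fin (nd v) → ℝ) where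
  toFun := cast (congrArg (fun w => Fin (nd w) → ℝ) h)
  map_add' := by subst h; intros; rfl
  map_smul' := by subst h; intros; rfl

@[simp] lemma pcastL_rfl_apply {u : V} (x : Fin (nd u) → ℝ) :
    pcastL (nd := nd) (rfl : u = u) x = x := rfl

lemma psd_cast {u v : V} (h : u = v) {M : Matrix (Fin (nd u)) (Fin (nd u)) ℝ}
    (hM : M.PosSemidef) :
    (cast (congrArg (fun w => Matrix (Fin (nd w)) (Fin (nd w)) ℝ) h) M).PosSemidef := by
  subst h; exact hM

lemma cast_matrix_sum {u v : V} (h : u = v) {ι : Type*} (s : Finset ι)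
    (M : ι → Matrix (Fin (nd u)) (Fin (nd u)) ℝ) :
    ∑ i ∈ s, cast (congrArg (fun w => Matrix (Fin (nd w)) (Fin (nd w)) ℝ) h) (M i)
      = cast (congrArg (fun w => Matrix (Fin (nd w)) (Fin (nd w)) ℝ) h) (∑ i ∈ s, M i) := by
  subst h; rfl

lemma my_dotProduct_sum {n : ℕ} {ι : Type*} (s : Finset ι) (x : Fin n → ℝ)
    (y : ι → Fin n → ℝ) : x ⬝ᵥ (∑ i ∈ s, y i) = ∑ i ∈ s, x ⬝ᵥ y i := by
  simp only [dotProduct, Finset.sum_apply, Finset.mul_sum]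
  exact Finset.sum_comm

lemma my_sum_mulVec {n : ℕ} {ι : Type*} (s : Finset ι) (N : ι → Matrix (Fin n) (Fin n) ℝ)
    (x : Fin n → ℝ) : (∑ i ∈ s, N i) *ᵥ x = ∑ i ∈ s, (N i) *ᵥ x := by
  classical
  induction s using Finset.induction with
  | empty => simp
  | insert _ _ hni ih => rw [Finset.sum_insert hni, Finset.sum_insert hni, Matrix.add_mulVec, ih]

lemma mem_ker_sum_psd {n : ℕ} {ι : Type*} (s : Finset ι) (N : ι → Matrix (Fin n) (Fin n) ℝ)
    (h : ∀ i ∈ s, (N i).PosSemidef) (x : Fin n → ℝ) :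
    (∑ i ∈ s, N i) *ᵥ x = 0 ↔ ∀ i ∈ s, N i *ᵥ x = 0 := by
  constructor
  · intro h0 i hi
    have hsv := my_sum_mulVec s N x
    have hsum : ∑ i ∈ s, x ⬝ᵥ (N i) *ᵥ x = 0 := by
      have : x ⬝ᵥ (∑ i ∈ s, N i) *ᵥ x = 0 := by rw [h0]; simp
      rw [hsv, my_dotProduct_sum] at this
      exact this
    have hz : ∀ i ∈ s, x ⬝ᵥ (N i) *ᵥ x = 0 := by
      rw [Finset.sum_eq_zero_iff_of_nonneg] at hsum
      · exact hsum
      · intro i hi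
        simpa using (h i hi).dotProduct_mulVec_nonneg x
    exact ((h i hi).dotProduct_mulVec_zero_iff x).mp (by simpa using hz i hi)
  · intro hz
    rw [my_sum_mulVec]
    exact Finset.sum_eq_zero fun i hi => hz i hi

end Aux
section B
variable {V Λ : Type*} {nd : V → ℕ} {m : ℕ}

lemma real_transpose_eq_conjTranspose {a b : ℕ} (M : Matrix (Fin a) (Fin b) ℝ) :
    Mᵀ = Mᴴ := by
  ext i j; simp [conjTranspose_apply]

lemma ker_CtC {a b : ℕ} (M : Matrix (Fin a) (Fin b) ℝ) (x : Fin b → ℝ) :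
    (Mᵀ * M) *ᵥ x = 0 ↔ M *ᵥ x = 0 := by
  rw [real_transpose_eq_conjTranspose]
  constructor
  · intro h
    have hd : x ⬝ᵥ ((Mᴴ * M) *ᵥ x) = 0 := by rw [h]; simp
    rw [← Matrix.mulVec_mulVec, Matrix.dotProduct_mulVec, Matrix.vecMul_conjTranspose] at hd
    have h2 : (M *ᵥ x) ⬝ᵥ (M *ᵥ x) = 0 := by simpa using hd
    exact dotProduct_self_eq_zero.mp h2
  · intro h
    rw [← Matrix.mulVec_mulVec, h, Matrix.mulVec_zero]

lemma ker_AtYA {a b : ℕ} (Y : Matrix (Fin a) (Fin a) ℝ) (hY : Y.PosSemidef)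
    (B : Matrix (Fin a) (Fin b) ℝ) (x : Fin b → ℝ) :
    (Bᵀ * Y * B) *ᵥ x = 0 ↔ Y *ᵥ (B *ᵥ x) = 0 := by
  constructor
  · intro h
    have hd : x ⬝ᵥ ((Bᵀ * Y * B) *ᵥ x) = 0 := by rw [h]; simp
    rw [← Matrix.mulVec_mulVec, ← Matrix.mulVec_mulVec, Matrix.dotProduct_mulVec x Bᵀ,
      Matrix.vecMul_transpose] at hd
    exact (hY.dotProduct_mulVec_zero_iff (B *ᵥ x)).mp (by simpa using hd)
  · intro h
    rw [← Matrix.mulVec_mulVec, ← Matrix.mulVec_mulVec, h, Matrix.mulVec_zero]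

end B

section Main
variable {V Λ : Type*} [DecidableEq V] [DecidableEq Λ] {nd : V → ℕ} {m : ℕ}
    (src tgt : Λ → V) (Efin : Finset Λ)
    (A : (σ : Λ) → Matrix (Fin (nd (tgt σ))) (Fin (nd (src σ))) ℝ)
    (C : (σ : Λ) → Matrix (Fin m) (Fin (nd (src σ))) ℝ)

lemma psd_sum {n : ℕ} {ι : Type*} (s : Finset ι) (N : ι → Matrix (Fin n) (Fin n) ℝ)
    (h : ∀ i ∈ s, (N i).PosSemidef) : (∑ i ∈ s, N i).PosSemidef := by
  classical
  induction s using Finset.induction with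
  | empty => simpa using Matrix.PosSemidef.zero
  | @insert a s' hni ih =>
      rw [Finset.sum_insert hni]
      exact ((h a (Finset.mem_insert_self a s')).add
        (ih fun i hi => h i (Finset.mem_insert_of_mem hi)))

lemma Xit_psd (k : ℕ) : ∀ v : V, (Xit src tgt Efin A C k v).PosSemidef := by
  induction k with
  | zero => intro v; simpa [Xit] using Matrix.PosSemidef.zero
  | succ k ih =>
      intro v
      apply psd_sum
      intro σ _
      refine psd_cast (Finset.mem_filter.mp σ.2).2 ?_
      split
      · rw [real_transpose_eq_conjTranspose]
        exact Matrix.posSemidef_conjTranspose_mul_self _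
      · rw [real_transpose_eq_conjTranspose]
        exact (ih (tgt σ.1)).conjTranspose_mul_mul_same _

/-- partial sums of the iteration -/
noncomputable def Zmat (k : ℕ) (v : V) : Matrix (Fin (nd v)) (Fin (nd v)) ℝ :=
  ∑ t ∈ Finset.range k, Xit src tgt Efin A C (t + 1) v

lemma Zmat_psd (k : ℕ) (v : V) : (Zmat src tgt Efin A C k v).PosSemidef :=
  psd_sum _ _ fun t _ => Xit_psd src tgt Efin A C (t+1) v

lemma Ck_eq_ker (k : ℕ) (v : V) :
    Ck src tgt Efin A C k v = LinearMap.ker (Zmat src tgt Efin A C k v).mulVecLin := by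
  unfold Ck Zmat
  congr 1
  rw [← Finset.Ico_add_one_right_eq_Icc, Finset.sum_Ico_eq_sum_range]
  simp [Nat.add_comm]

lemma Ck_zero (v : V) : Ck src tgt Efin A C 0 v = ⊤ := by
  rw [Ck_eq_ker]
  simp [Zmat]

lemma Zmat_succ (k : ℕ) (v : V) :
    Zmat src tgt Efin A C (k+1) v = Xit src tgt Efin A C 1 v +
      ∑ σ ∈ (Efin.filter fun σ => src σ = v).attach,
        cast (congrArg (fun u => Matrix (Fin (nd u)) (Fin (nd u)) ℝ)
            ((Finset.mem_filter.mp σ.2).2))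
          ((A σ.1)ᵀ * Zmat src tgt Efin A C k (tgt σ.1) * A σ.1) := by
  unfold Zmat
  rw [Finset.sum_range_succ']
  rw [add_comm]
  congr 1
  have hstep : ∀ t, Xit src tgt Efin A C (t + 1 + 1) v =
      ∑ σ ∈ (Efin.filter fun σ => src σ = v).attach,
        cast (congrArg (fun u => Matrix (Fin (nd u)) (Fin (nd u)) ℝ)
            ((Finset.mem_filter.mp σ.2).2))
          ((A σ.1)ᵀ * Xit src tgt Efin A C (t+1) (tgt σ.1) * A σ.1) := by
    intro t
    conv_lhs => rw [Xit]
    simp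
  calc ∑ t ∈ Finset.range k, Xit src tgt Efin A C (t + 1 + 1) v
      = ∑ t ∈ Finset.range k, ∑ σ ∈ (Efin.filter fun σ => src σ = v).attach,
          cast (congrArg (fun u => Matrix (Fin (nd u)) (Fin (nd u)) ℝ)
              ((Finset.mem_filter.mp σ.2).2))
            ((A σ.1)ᵀ * Xit src tgt Efin A C (t+1) (tgt σ.1) * A σ.1) := by
        exact Finset.sum_congr rfl fun t _ => hstep t
    _ = _ := by
        rw [Finset.sum_comm]
        refine Finset.sum_congr rfl fun σ _ => ?_
        rw [cast_matrix_sum (Finset.mem_filter.mp σ.2).2]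
        congr 1
        simp only [Matrix.mul_sum, Matrix.sum_mul]

lemma Xit_one (v : V) :
    Xit src tgt Efin A C 1 v =
      ∑ σ ∈ (Efin.filter fun σ => src σ = v).attach,
        cast (congrArg (fun u => Matrix (Fin (nd u)) (Fin (nd u)) ℝ)
            ((Finset.mem_filter.mp σ.2).2)) ((C σ.1)ᵀ * C σ.1) := by
  conv_lhs => rw [Xit]
  simp

lemma ker_add_psd {n : ℕ} {M N : Matrix (Fin n) (Fin n) ℝ}
    (hM : M.PosSemidef) (hN : N.PosSemidef) (x : Fin n → ℝ) :
    (M + N) *ᵥ x = 0 ↔ M *ᵥ x = 0 ∧ N *ᵥ x = 0 := by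
  constructor
  · intro h
    have hd : x ⬝ᵥ (M *ᵥ x) + x ⬝ᵥ (N *ᵥ x) = 0 := by
      have : x ⬝ᵥ ((M + N) *ᵥ x) = 0 := by rw [h]; simp
      rwa [Matrix.add_mulVec, dotProduct_add] at this
    have h1 : x ⬝ᵥ (M *ᵥ x) = 0 := by
      have m0 := hM.dotProduct_mulVec_nonneg x; have n0 := hN.dotProduct_mulVec_nonneg x
      simp only [star_trivial] at m0 n0
      linarith
    have h2 : x ⬝ᵥ (N *ᵥ x) = 0 := by
      have m0 := hM.dotProduct_mulVec_nonneg x; have n0 := hN.dotProduct_mulVec_nonneg x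
      simp only [star_trivial] at m0 n0
      linarith
    exact ⟨(hM.dotProduct_mulVec_zero_iff x).mp (by simpa using h1),
      (hN.dotProduct_mulVec_zero_iff x).mp (by simpa using h2)⟩
  · rintro ⟨h1, h2⟩
    rw [Matrix.add_mulVec, h1, h2, add_zero]

lemma mem_ker_cast_CtC {σ : Λ} {v : V} (h : src σ = v) (x : Fin (nd v) → ℝ) :
    (cast (congrArg (fun u => Matrix (Fin (nd u)) (Fin (nd u)) ℝ) h)
      ((C σ)ᵀ * C σ)) *ᵥ x = 0 ↔ (C σ) *ᵥ (pcastL (nd := nd) h.symm x) = 0 := by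
  subst h; exact ker_CtC (C σ) x

lemma mem_ker_cast_AtYA {σ : Λ} {v : V} (h : src σ = v)
    (Y : Matrix (Fin (nd (tgt σ))) (Fin (nd (tgt σ))) ℝ) (hY : Y.PosSemidef)
    (x : Fin (nd v) → ℝ) :
    (cast (congrArg (fun u => Matrix (Fin (nd u)) (Fin (nd u)) ℝ) h)
      ((A σ)ᵀ * Y * A σ)) *ᵥ x = 0 ↔ Y *ᵥ ((A σ) *ᵥ (pcastL (nd := nd) h.symm x)) = 0 := by
  subst h; exact ker_AtYA Y hY (A σ) x

lemma sumZ_psd (k : ℕ) (v : V) : ∀ σ ∈ (Efin.filter fun σ => src σ = v).attach,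
    (cast (congrArg (fun u => Matrix (Fin (nd u)) (Fin (nd u)) ℝ)
        ((Finset.mem_filter.mp σ.2).2))
      ((A σ.1)ᵀ * Zmat src tgt Efin A C k (tgt σ.1) * A σ.1)).PosSemidef := by
  intro σ _
  refine psd_cast (Finset.mem_filter.mp σ.2).2 ?_
  rw [real_transpose_eq_conjTranspose]
  exact (Zmat_psd src tgt Efin A C k (tgt σ.1)).conjTranspose_mul_mul_same _

lemma sumC_psd (v : V) : ∀ σ ∈ (Efin.filter fun σ => src σ = v).attach,
    (cast (congrArg (fun u => Matrix (Fin (nd u)) (Fin (nd u)) ℝ)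
        ((Finset.mem_filter.mp σ.2).2)) ((C σ.1)ᵀ * C σ.1)).PosSemidef := by
  intro σ _
  refine psd_cast (Finset.mem_filter.mp σ.2).2 ?_
  rw [real_transpose_eq_conjTranspose]
  exact Matrix.posSemidef_conjTranspose_mul_self _

/-- Key recursion for the kernels. -/
lemma mem_Ck_succ (k : ℕ) (v : V) (x : Fin (nd v) → ℝ) :
    x ∈ Ck src tgt Efin A C (k+1) v ↔
      ∀ σ ∈ Efin, ∀ h : src σ = v,
        (C σ) *ᵥ (pcastL (nd := nd) h.symm x) = 0 ∧
        (A σ) *ᵥ (pcastL (nd := nd) h.symm x) ∈ Ck src tgt Efin A C k (tgt σ) := by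
  rw [Ck_eq_ker, LinearMap.mem_ker,
    show (Zmat src tgt Efin A C (k+1) v).mulVecLin x
      = (Zmat src tgt Efin A C (k+1) v) *ᵥ x from rfl,
    Zmat_succ,
    ker_add_psd (Xit_psd src tgt Efin A C 1 v)
      (psd_sum _ _ (sumZ_psd src tgt Efin A C k v)) x,
    Xit_one,
    mem_ker_sum_psd _ _ (sumC_psd src Efin C v) x,
    mem_ker_sum_psd _ _ (sumZ_psd src tgt Efin A C k v) x]
  constructor
  · rintro ⟨h1, h2⟩ σ hσE hσv
    have hmem : σ ∈ Efin.filter fun σ => src σ = v := Finset.mem_filter.mpr ⟨hσE, hσv⟩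
    constructor
    · exact (mem_ker_cast_CtC src C (Finset.mem_filter.mp hmem).2 x).mp
        (h1 ⟨σ, hmem⟩ (Finset.mem_attach _ _))
    · rw [Ck_eq_ker, LinearMap.mem_ker]
      exact (mem_ker_cast_AtYA src tgt A (Finset.mem_filter.mp hmem).2 _
        (Zmat_psd src tgt Efin A C k (tgt σ)) x).mp (h2 ⟨σ, hmem⟩ (Finset.mem_attach _ _))
  · intro h
    constructor
    · intro σ _
      exact (mem_ker_cast_CtC src C (Finset.mem_filter.mp σ.2).2 x).mpr
        (h σ.1 (Finset.mem_filter.mp σ.2).1 (Finset.mem_filter.mp σ.2).2).1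
    · intro σ _
      refine (mem_ker_cast_AtYA src tgt A (Finset.mem_filter.mp σ.2).2 _
        (Zmat_psd src tgt Efin A C k (tgt σ.1)) x).mpr ?_
      have := (h σ.1 (Finset.mem_filter.mp σ.2).1 (Finset.mem_filter.mp σ.2).2).2
      rwa [Ck_eq_ker, LinearMap.mem_ker] at this

/-- Shift a path by one step. -/
lemma fstate_shift (σseq : ℕ → Λ) (hch : ∀ t, tgt (σseq t) = src (σseq (t + 1)))
    (x : Fin (nd (src (σseq 0))) → ℝ) (t : ℕ) :
    fstate src tgt A (fun n => σseq (n + 1)) (fun n => hch (n + 1))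
      (fstate src tgt A σseq hch x 1) t = fstate src tgt A σseq hch x (t + 1) := by
  induction t with
  | zero => rfl
  | succ t ih =>
      conv_lhs => rw [fstate]
      rw [ih]
      rfl

def prepend (σ : Λ) (τ : ℕ → Λ) : ℕ → Λ
  | 0 => σ
  | n + 1 => τ n

lemma prepend_chain (σ : Λ) (τ : ℕ → Λ) (h0 : tgt σ = src (τ 0))
    (hτ : ∀ t, tgt (τ t) = src (τ (t + 1))) :
    ∀ t, tgt (prepend σ τ t) = src (prepend σ τ (t + 1))
  | 0 => h0
  | t + 1 => hτ t

lemma fstate_prepend (σ : Λ) (τ : ℕ → Λ) (h0 : tgt σ = src (τ 0))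
    (hτ : ∀ t, tgt (τ t) = src (τ (t + 1))) (x : Fin (nd (src σ)) → ℝ) (t : ℕ) :
    fstate src tgt A (prepend σ τ) (prepend_chain src tgt σ τ h0 hτ) x (t + 1)
      = fstate src tgt A τ hτ
          (cast (congrArg (fun u => Fin (nd u) → ℝ) h0) ((A σ).mulVec x)) t := by
  induction t with
  | zero => rfl
  | succ t ih =>
      conv_lhs => erw [fstate.eq_2]
      rw [ih]
      rfl

lemma exists_chain (hnext : ∀ v : V, ∃ σ ∈ Efin, src σ = v) (v : V) :
    ∃ ρ : ℕ → Λ, (∀ t, ρ t ∈ Efin) ∧ (∀ t, tgt (ρ t) = src (ρ (t + 1))) ∧ src (ρ 0) = v := by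
  choose f hfE hfs using hnext
  refine ⟨fun n => Nat.rec (f v) (fun _ σ => f (tgt σ)) n, fun t => ?_, fun t => ?_, hfs v⟩
  · induction t with
    | zero => exact hfE v
    | succ n _ => exact hfE _
  · exact (hfs _).symm

/-- Unobservability over all paths of length at most `k`. -/
def Obs (k : ℕ) (v : V) (x : Fin (nd v) → ℝ) : Prop :=
  ∀ T ≤ k, ∀ (σseq : ℕ → Λ) (hch : ∀ t, tgt (σseq t) = src (σseq (t + 1)))
    (h0 : src (σseq 0) = v), (∀ t < T, σseq t ∈ Efin) →
    ∀ t < T, (C (σseq t)).mulVec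
      (fstate src tgt A σseq hch
        (cast (congrArg (fun u => Fin (nd u) → ℝ) h0.symm) x) t) = 0

lemma Ck_char (hnext : ∀ v : V, ∃ σ ∈ Efin, src σ = v) :
    ∀ (k : ℕ) (v : V) (x : Fin (nd v) → ℝ),
      x ∈ Ck src tgt Efin A C k v ↔ Obs src tgt Efin A C k v x := by
  intro k
  induction k with
  | zero =>
      intro v x
      rw [Ck_zero]
      simp only [Submodule.mem_top, true_iff]
      intro T hT σseq hch h0 hE t ht
      omega
  | succ k ih =>
      intro v x
      rw [mem_Ck_succ]
      constructor
      · intro h T hT σseq hch h0 hE t ht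
        cases t with
        | zero => exact (h (σseq 0) (hE 0 ht) h0).1
        | succ t' =>
            have hpos : 0 < T := by omega
            have hc := (h (σseq 0) (hE 0 hpos) h0).2
            have key := (ih (tgt (σseq 0)) _).mp hc (T - 1) (by omega)
              (fun n => σseq (n + 1)) (fun n => hch (n + 1)) (hch 0).symm
              (fun s hs => hE (s + 1) (by omega)) t' (by omega)
            rw [← fstate_shift src tgt A σseq hch
              (cast (congrArg (fun u => Fin (nd u) → ℝ) h0.symm) x) t']
            exact key
      · intro hObs σ hσE hσv
        constructor
        · obtain ⟨ρ0, hρE, hρch, hρ0⟩ := exists_chain src tgt Efin hnext (tgt σ)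
          have hρchain := prepend_chain src tgt σ ρ0 hρ0.symm hρch
          have h0' : src (prepend σ ρ0 0) = v := hσv
          have hE' : ∀ t < 1, prepend σ ρ0 t ∈ Efin := by
            intro t ht
            have : t = 0 := by omega
            subst this
            exact hσE
          exact hObs 1 (by omega) _ hρchain h0' hE' 0 (by omega)
        · rw [ih]
          intro T hT τ hchτ h0τ hEτ t ht
          have hρch := prepend_chain src tgt σ τ h0τ.symm hchτ
          have h0' : src (prepend σ τ 0) = v := hσv
          have hE' : ∀ s < T + 1, prepend σ τ s ∈ Efin := by
            intro s hs
            cases s with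
            | zero => exact hσE
            | succ s' => exact hEτ s' (by omega)
          have key := hObs (T + 1) (by omega) _ hρch h0' hE' (t + 1) (by omega)
          rw [← fstate_prepend src tgt A σ τ h0τ.symm hchτ (pcastL (nd := nd) hσv.symm x) t]
          exact key

lemma Ck_mono' (hnext : ∀ v : V, ∃ σ ∈ Efin, src σ = v) (k : ℕ) (v : V) :
    Ck src tgt Efin A C (k + 1) v ≤ Ck src tgt Efin A C k v := by
  intro x hx
  rw [Ck_char src tgt Efin A C hnext] at hx ⊢
  intro T hT
  exact hx T (by omega)

lemma Ck_eqstep (k : ℕ) (h : ∀ u, Ck src tgt Efin A C (k + 1) u = Ck src tgt Efin A C k u)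
    (v : V) : Ck src tgt Efin A C (k + 2) v = Ck src tgt Efin A C (k + 1) v := by
  ext x
  rw [show k + 2 = (k + 1) + 1 from rfl, mem_Ck_succ, mem_Ck_succ]
  constructor <;>
  · intro hx σ hE hs
    obtain ⟨h1, h2⟩ := hx σ hE hs
    refine ⟨h1, ?_⟩
    first
    | rwa [h (tgt σ)] at h2
    | rwa [← h (tgt σ)] at h2

lemma Ck_const (j : ℕ) (h : ∀ u, Ck src tgt Efin A C (j + 1) u = Ck src tgt Efin A C j u) :
    ∀ i v, Ck src tgt Efin A C (j + i) v = Ck src tgt Efin A C j v := by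
  have hstep : ∀ i u, Ck src tgt Efin A C (j + i + 1) u = Ck src tgt Efin A C (j + i) u := by
    intro i
    induction i with
    | zero => exact h
    | succ i ih =>
        intro u
        have := Ck_eqstep src tgt Efin A C (j + i) ih u
        rwa [show j + i + 2 = j + (i + 1) + 1 from by omega,
          show j + i + 1 = j + (i + 1) from by omega] at this
  intro i
  induction i with
  | zero => intro v; rfl
  | succ i ih => intro v; rw [show j + (i + 1) = j + i + 1 from by omega, hstep i v, ih v]

section Fin
variable [Fintype V]

noncomputable def Dk (k : ℕ) : ℕ := ∑ v : V, Module.finrank ℝ (Ck src tgt Efin A C k v)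

lemma Dk_zero : Dk src tgt Efin A C 0 = ∑ v : V, nd v := by
  unfold Dk
  refine Finset.sum_congr rfl fun v _ => ?_
  rw [Ck_zero, finrank_top, Module.finrank_fin_fun]

lemma Dk_lt (hnext : ∀ v : V, ∃ σ ∈ Efin, src σ = v) (k : ℕ)
    (h : ∃ v, Ck src tgt Efin A C (k + 1) v ≠ Ck src tgt Efin A C k v) :
    Dk src tgt Efin A C (k + 1) < Dk src tgt Efin A C k := by
  obtain ⟨v, hv⟩ := h
  refine Finset.sum_lt_sum (fun u _ => Submodule.finrank_mono
    (Ck_mono' src tgt Efin A C hnext k u)) ⟨v, Finset.mem_univ v, ?_⟩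
  exact Submodule.finrank_lt_finrank_of_lt
    (lt_of_le_of_ne (Ck_mono' src tgt Efin A C hnext k v) hv)

lemma exists_stab (hnext : ∀ v : V, ∃ σ ∈ Efin, src σ = v) :
    ∃ j ≤ ∑ u : V, nd u, ∀ v, Ck src tgt Efin A C (j + 1) v = Ck src tgt Efin A C j v := by
  set K := ∑ u : V, nd u with hK
  by_contra hcon
  push_neg at hcon
  have hd : ∀ k, k ≤ K + 1 → Dk src tgt Efin A C k + k ≤ K := by
    intro k
    induction k with
    | zero => intro _; simpa [Dk_zero, hK] using le_refl K
    | succ k ih =>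
        intro hk
        have h1 := Dk_lt src tgt Efin A C hnext k (hcon k (by omega))
        have h2 := ih (by omega)
        omega
  have := hd (K + 1) (le_refl _)
  omega

lemma Ck_stab (hnext : ∀ v : V, ∃ σ ∈ Efin, src σ = v) (k : ℕ) (hk : (∑ u : V, nd u) ≤ k)
    (v : V) : Ck src tgt Efin A C k v = Ck src tgt Efin A C (∑ u : V, nd u) v := by
  obtain ⟨j, hj, h⟩ := exists_stab src tgt Efin A C hnext
  have h1 := Ck_const src tgt Efin A C j h (k - j) v
  have h2 := Ck_const src tgt Efin A C j h ((∑ u : V, nd u) - j) v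
  rw [show j + (k - j) = k from by omega] at h1
  rw [show j + ((∑ u : V, nd u) - j) = ∑ u : V, nd u from by omega] at h2
  rw [h1, h2]

end Fin

end Main

/-- the kernels of the observability iteration are exactly the
states unobservable over paths of length at most `k`; the sequence is
nonincreasing and stabilizes after `K = ∑_v n_v` steps to the unobservable
subspace `C_v`. -/
theorem stmt10 {V Λ : Type*} [DecidableEq V] [DecidableEq Λ] [Fintype V]
    {nd : V → ℕ} {m : ℕ} (src tgt : Λ → V) (Efin : Finset Λ)
    (A : (σ : Λ) → Matrix (Fin (nd (tgt σ))) (Fin (nd (src σ))) ℝ)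
    (C : (σ : Λ) → Matrix (Fin m) (Fin (nd (src σ))) ℝ)
    (hnext : ∀ v : V, ∃ σ ∈ Efin, src σ = v) :
    (∀ (v : V) (k : ℕ) (x : Fin (nd v) → ℝ),
        x ∈ Ck src tgt Efin A C k v ↔
        ∀ T ≤ k, ∀ (σseq : ℕ → Λ) (hch : ∀ t, tgt (σseq t) = src (σseq (t + 1)))
          (h0 : src (σseq 0) = v), (∀ t < T, σseq t ∈ Efin) →
          ∀ t < T, (C (σseq t)).mulVec
            (fstate src tgt A σseq hch
              (cast (congrArg (fun u => Fin (nd u) → ℝ) h0.symm) x) t) = 0)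
    ∧ (∀ (v : V) (k : ℕ), Ck src tgt Efin A C (k + 1) v ≤ Ck src tgt Efin A C k v)
    ∧ (∀ (v : V) (k : ℕ), (∑ u : V, nd u) ≤ k →
        Ck src tgt Efin A C k v = Ck src tgt Efin A C (∑ u : V, nd u) v)
    ∧ (∀ (v : V) (x : Fin (nd v) → ℝ),
        x ∈ Ck src tgt Efin A C (∑ u : V, nd u) v ↔
        ∀ (T : ℕ) (σseq : ℕ → Λ) (hch : ∀ t, tgt (σseq t) = src (σseq (t + 1)))
          (h0 : src (σseq 0) = v), (∀ t < T, σseq t ∈ Efin) →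
          ∀ t < T, (C (σseq t)).mulVec
            (fstate src tgt A σseq hch
              (cast (congrArg (fun u => Fin (nd u) → ℝ) h0.symm) x) t) = 0) := by
  refine ⟨fun v k x => Ck_char src tgt Efin A C hnext k v x,
    fun v k => Ck_mono' src tgt Efin A C hnext k v,
    fun v k hk => Ck_stab src tgt Efin A C hnext k hk v,
    fun v x => ?_⟩
  constructor
  · intro hx T σseq hch h0 hE t ht
    have hx2 : x ∈ Ck src tgt Efin A C (max T (∑ u : V, nd u)) v := by
      rw [Ck_stab src tgt Efin A C hnext _ (le_max_right _ _) v]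
      exact hx
    exact (Ck_char src tgt Efin A C hnext _ v x).mp hx2 T (le_max_left _ _) σseq hch h0 hE t ht
  · intro h
    rw [Ck_char src tgt Efin A C hnext]
    intro T hT σseq hch h0 hE t ht
    exact h T σseq hch h0 hE t ht
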